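/- arXiv:1101.1936 — 2 statements merged into one kernel-verified Lean document; each statement's English description precedes it below -/
import Mathlib

section
/- For any right artinian ring R, φ-dim(R) ≤ gl.dim(R), i.e. the supremum of the Igusa–Todorov function φ over finitely generated right R-modules is at most the global dimension of R. -/
/-!
If every module has projective dimension at most `d`, then some `d`-th syzygy of each
indecomposable summand `N` of `M` is projective, so `Ω^d [N] = 0` in `K`. Hence
`Ω^i ⟨M⟩ = 0` for every `i ≥ d`, the ranks are constant (zero) from `d` on, and `φ(M) ≤ d`.
-/

open Module Function

universe u

variable (R : Type u) [Ring R]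

/-- A finitely generated right `R`-module, encoded as a module over `Rᵐᵒᵖ`. -/
structure FGMod where
  carrier : Type u
  [isAddCommGroup : AddCommGroup carrier]
  [isModule : Module Rᵐᵒᵖ carrier]
  [isFinite : Module.Finite Rᵐᵒᵖ carrier]

attribute [instance] FGMod.isAddCommGroup FGMod.isModule FGMod.isFinite

instance : CoeSort (FGMod R) (Type u) := ⟨FGMod.carrier⟩

variable {R}

/-- Isomorphism of f.g. right modules. -/
def FGMod.Iso (M N : FGMod R) : Prop := Nonempty (M ≃ₗ[Rᵐᵒᵖ] N)

/-- Direct sum. -/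
def FGMod.prod (M N : FGMod R) : FGMod R := ⟨M × N⟩

/-- `M^k`, the direct sum of `k` copies of `M`. -/
def FGMod.pow (M : FGMod R) (k : ℕ) : FGMod R := ⟨Fin k → M⟩

/-- `N` is (isomorphic to) a direct summand of `M`. -/
def FGMod.IsSummand (N M : FGMod R) : Prop :=
  ∃ A B : Submodule Rᵐᵒᵖ M, IsCompl A B ∧ Nonempty (N ≃ₗ[Rᵐᵒᵖ] A)

/-- `M` is indecomposable. -/
def FGMod.Indec (M : FGMod R) : Prop :=
  Nontrivial M ∧ ∀ A B : Submodule Rᵐᵒᵖ M, IsCompl A B → A = ⊥ ∨ B = ⊥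

/-- `M` is projective. -/
def FGMod.Proj (M : FGMod R) : Prop := Module.Projective Rᵐᵒᵖ M

/-- `f : P → M` is a projective cover: `P` projective, `f` surjective with superfluous kernel. -/
def IsProjCover (M P : FGMod R) (f : P →ₗ[Rᵐᵒᵖ] M) : Prop :=
  P.Proj ∧ Surjective f ∧ ∀ N : Submodule Rᵐᵒᵖ P, N ⊔ LinearMap.ker f = ⊤ → N = ⊤

/-- `N` is a (first) syzygy of `M`: the kernel of a projective cover of `M`. -/
def IsSyzygy (M N : FGMod R) : Prop :=
  ∃ (P : FGMod R) (f : P →ₗ[Rᵐᵒᵖ] M),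
    IsProjCover M P f ∧ Nonempty (N ≃ₗ[Rᵐᵒᵖ] LinearMap.ker f)

/-- `N` is an `n`-th syzygy of `M`. -/
def IsSyzygyN : ℕ → FGMod R → FGMod R → Prop
  | 0, M, N => M.Iso N
  | n+1, M, N => ∃ L, IsSyzygy M L ∧ IsSyzygyN n L N

/-- `M` has projective dimension at most `n`. -/
def HasPdLE : ℕ → FGMod R → Prop
  | 0, M => M.Proj
  | n+1, M => M.Proj ∨ ∃ N, IsSyzygy M N ∧ HasPdLE n N

/-- `M` has finite projective dimension. -/
def FinPd (M : FGMod R) : Prop := ∃ n, HasPdLE n M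

/-- The projective dimension of `M` (junk value if infinite). -/
noncomputable def pdIT (M : FGMod R) : ℕ := sInf {n | HasPdLE n M}

variable (R)

/-- The Igusa–Todorov relations in the free abelian group on f.g. right modules:
`[A] - [B] - [C]` whenever `A ≅ B ⊕ C`, and `[P]` for `P` projective. -/
def ITRel : Set (FreeAbelianGroup (FGMod R)) :=
  {x | ∃ A B C : FGMod R, Nonempty (A ≃ₗ[Rᵐᵒᵖ] (B × C : Type u)) ∧
        x = FreeAbelianGroup.of A - FreeAbelianGroup.of B - FreeAbelianGroup.of C} ∪
  {x | ∃ P : FGMod R, P.Proj ∧ x = FreeAbelianGroup.of P}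

/-- The Igusa–Todorov group `K`. -/
def ITK := FreeAbelianGroup (FGMod R) ⧸ AddSubgroup.closure (ITRel R)

noncomputable instance : AddCommGroup (ITK R) :=
  QuotientAddGroup.Quotient.addCommGroup _

/-- The class `[M]` in `K`. -/
noncomputable def ITcls (M : FGMod R) : ITK R := QuotientAddGroup.mk (FreeAbelianGroup.of M)

/-- `⟨M⟩`: the subgroup of `K` generated by the indecomposable non-projective
direct summands of `M`. -/
noncomputable def ITgen (M : FGMod R) : AddSubgroup (ITK R) :=
  AddSubgroup.closure
    {x | ∃ N : FGMod R, N.IsSummand M ∧ N.Indec ∧ ¬N.Proj ∧ x = ITcls R N}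

/-- The rank of a subgroup of `K`. -/
noncomputable def rkIT (H : AddSubgroup (ITK R)) : ℕ :=
  Module.finrank ℤ (AddSubgroup.toIntSubmodule H)

/-- `OmK` is a syzygy endomorphism of `K`: a group endomorphism sending `[M]` to `[ΩM]`. -/
def IsSyzygyEnd (OmK : AddMonoid.End (ITK R)) : Prop :=
  ∀ M N : FGMod R, IsSyzygy M N → OmK (ITcls R M) = ITcls R N

/-- The Igusa–Todorov function `φ`: the least `n` such that the rank of
`Ω^i⟨M⟩` equals that of `Ω^n⟨M⟩` for all `i ≥ n`. -/
noncomputable def phiIT (OmK : AddMonoid.End (ITK R)) (M : FGMod R) : ℕ :=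
  sInf {n | ∀ i, n ≤ i →
    rkIT R ((ITgen R M).map ((OmK ^ i : AddMonoid.End (ITK R)) : ITK R →+ ITK R))
      = rkIT R ((ITgen R M).map ((OmK ^ n : AddMonoid.End (ITK R)) : ITK R →+ ITK R))}

/-- The second Igusa–Todorov function `ψ`. -/
noncomputable def psiIT (OmK : AddMonoid.End (ITK R)) (M : FGMod R) : ℕ :=
  phiIT R OmK M + sSup {d | ∃ N X : FGMod R, IsSyzygyN (phiIT R OmK M) M N ∧
      X.IsSummand N ∧ FinPd X ∧ d = pdIT X}

/-- The socle of a module: the sum of its simple submodules. -/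
def socleIT (M : FGMod R) : Submodule Rᵐᵒᵖ M :=
  sSup {S : Submodule Rᵐᵒᵖ M | IsSimpleModule Rᵐᵒᵖ S}

namespace FGMod

variable {R}

def zero : FGMod R := ⟨PUnit⟩

instance : Unique (zero : FGMod R) := inferInstanceAs (Unique PUnit)

theorem zero_proj : (zero : FGMod R).Proj :=
  inferInstanceAs (Module.Projective Rᵐᵒᵖ PUnit.{u + 1})

end FGMod

section Syzygy

variable {R}

theorem hasPdLE_of_proj {M : FGMod R} (h : M.Proj) : ∀ n, HasPdLE n M
  | 0 => h
  | _ + 1 => Or.inl h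

theorem isSyzygy_zero_of_proj {M : FGMod R} (h : M.Proj) : IsSyzygy M FGMod.zero := by
  refine ⟨M, LinearMap.id, ⟨h, surjective_id, fun N hN => by simpa using hN⟩, ?_⟩
  have : Subsingleton (LinearMap.ker (LinearMap.id : M →ₗ[Rᵐᵒᵖ] M)) := by
    rw [LinearMap.ker_id]
    infer_instance
  exact ⟨LinearEquiv.ofSubsingleton _ _⟩

/-- Below a projective module the resolution continues with zero modules, which is what lets a
bound `pd M ≤ n` produce an `n`-th syzygy rather than an earlier one. -/
theorem exists_isSyzygyN_proj_of_hasPdLE :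
    ∀ (n : ℕ) (M : FGMod R), HasPdLE n M → ∃ N, IsSyzygyN n M N ∧ N.Proj
  | 0, M, h => ⟨M, ⟨LinearEquiv.refl _ _⟩, h⟩
  | n + 1, M, h => by
    rcases h with hM | ⟨L, hML, hL⟩
    · obtain ⟨N, hN, hNproj⟩ :=
        exists_isSyzygyN_proj_of_hasPdLE n _ (hasPdLE_of_proj FGMod.zero_proj n)
      exact ⟨N, ⟨FGMod.zero, isSyzygy_zero_of_proj hM, hN⟩, hNproj⟩
    · obtain ⟨N, hN, hNproj⟩ := exists_isSyzygyN_proj_of_hasPdLE n L hL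
      exact ⟨N, ⟨L, hML, hN⟩, hNproj⟩

end Syzygy

section ClassGroup

variable {R}

theorem itcls_eq_zero_of_proj {P : FGMod R} (h : P.Proj) : ITcls R P = 0 :=
  (QuotientAddGroup.eq_zero_iff _).2 (AddSubgroup.subset_closure (Or.inr ⟨P, h, rfl⟩))

/-- `M ≅ N ⊕ 0` and `[0] = 0`. -/
theorem itcls_eq_of_iso {M N : FGMod R} (h : M.Iso N) : ITcls R M = ITcls R N := by
  obtain ⟨e⟩ := h
  have hsplit : FreeAbelianGroup.of M - FreeAbelianGroup.of N
      - FreeAbelianGroup.of FGMod.zero ∈ AddSubgroup.closure (ITRel R) :=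
    AddSubgroup.subset_closure
      (Or.inl ⟨M, N, FGMod.zero, ⟨e.trans LinearEquiv.prodUnique.symm⟩, rfl⟩)
  have hzero : FreeAbelianGroup.of (FGMod.zero : FGMod R) ∈ AddSubgroup.closure (ITRel R) :=
    AddSubgroup.subset_closure (Or.inr ⟨FGMod.zero, FGMod.zero_proj, rfl⟩)
  refine QuotientAddGroup.eq_iff_sub_mem.2 ?_
  simpa using AddSubgroup.add_mem _ hsplit hzero

variable {OmK : AddMonoid.End (ITK R)}

theorem IsSyzygyEnd.pow_apply_itcls (hOm : IsSyzygyEnd R OmK) :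
    ∀ (n : ℕ) (M N : FGMod R), IsSyzygyN n M N → (OmK ^ n) (ITcls R M) = ITcls R N
  | 0, _, _, h => itcls_eq_of_iso h
  | n + 1, M, N, ⟨L, hML, hLN⟩ => by
    rw [pow_succ, AddMonoid.End.coe_mul, comp_apply, hOm M L hML]
    exact hOm.pow_apply_itcls n L N hLN

theorem IsSyzygyEnd.pow_apply_itcls_eq_zero (hOm : IsSyzygyEnd R OmK) {n i : ℕ}
    {M : FGMod R} (hM : HasPdLE n M) (hi : n ≤ i) : (OmK ^ i) (ITcls R M) = 0 := by
  obtain ⟨N, hMN, hN⟩ := exists_isSyzygyN_proj_of_hasPdLE n M hM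
  rw [← Nat.sub_add_cancel hi, pow_add, AddMonoid.End.coe_mul, comp_apply,
    hOm.pow_apply_itcls n M N hMN, itcls_eq_zero_of_proj hN, map_zero]

end ClassGroup

section Phi

variable {R}

theorem map_itgen_eq_bot {f : ITK R →+ ITK R} (hf : ∀ N : FGMod R, f (ITcls R N) = 0)
    (M : FGMod R) : (ITgen R M).map f = ⊥ := by
  rw [ITgen, AddMonoidHom.map_closure, eq_bot_iff, AddSubgroup.closure_le]
  rintro _ ⟨_, ⟨N, -, -, -, rfl⟩, rfl⟩
  exact hf N

theorem phiIT_le_of_map_pow_eq_bot {OmK : AddMonoid.End (ITK R)} {M : FGMod R} {n : ℕ}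
    (h : ∀ i, n ≤ i →
      (ITgen R M).map ((OmK ^ i : AddMonoid.End (ITK R)) : ITK R →+ ITK R) = ⊥) :
    phiIT R OmK M ≤ n :=
  Nat.sInf_le fun i hi => by rw [h i hi, h n le_rfl]

end Phi

theorem phidim_le_gldim_general (R : Type u) [Ring R]
    (OmK : AddMonoid.End (ITK R)) (hOm : IsSyzygyEnd R OmK)
    (d : ℕ) (hgl : ∀ M : FGMod R, HasPdLE d M) :
    ∀ M : FGMod R, phiIT R OmK M ≤ d := fun M =>
  phiIT_le_of_map_pow_eq_bot fun _ hi =>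
    map_itgen_eq_bot (fun N => hOm.pow_apply_itcls_eq_zero (hgl N) hi) M

/-- `φ-dim(R) ≤ gl.dim(R)`: if every f.g. right `R`-module has
projective dimension at most `d`, then `φ(M) ≤ d` for all f.g. `M`. -/
theorem phidim_le_gldim (R : Type u) [Ring R] [IsArtinianRing Rᵐᵒᵖ]
    (OmK : AddMonoid.End (ITK R)) (hOm : IsSyzygyEnd R OmK)
    (d : ℕ) (hgl : ∀ M : FGMod R, HasPdLE d M) :
    ∀ M : FGMod R, phiIT R OmK M ≤ d :=
  phidim_le_gldim_general R OmK hOm d hgl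
end

section
/- Let R be a right artinian right self-injective ring and M₁, M₂ finitely generated right R-modules with no projective direct summands. If Ω^n M₁ ≅ Ω^n M₂ for some n ≥ 0, then M₁ ≅ M₂. -/
open Module Function

universe u

variable (R : Type u) [Ring R]

variable {R}

variable (R)

/-!
Over a self-injective ring finitely generated projectives are injective. If `M` has no projective
summand and `f : P → M` is a projective cover, `K = ker f` is essential in `P`: inside the
injective `P`, a submodule meeting `K` trivially extends to a summand of `P` whose complement
contains `K`, and `f` carries that summand isomorphically onto a projective summand of `M`.
So `P` is an injective hull of `ΩM = K`; injective hulls being unique, `ΩM₁ ≅ ΩM₂` extends to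
`P₁ ≅ P₂`, which induces `M₁ ≅ P₁/ΩM₁ ≅ P₂/ΩM₂ ≅ M₂`. A syzygy has no projective summand either
(such a summand is injective, so it would split off `P` inside the superfluous kernel), and
induction on `n` finishes.
-/

theorem exists_le_maximal_disjoint {α : Type*} [CompleteLattice α] [IsCompactlyGenerated α]
    {a b : α} (h : Disjoint a b) : ∃ m, b ≤ m ∧ Maximal (Disjoint a) m :=
  zorn_le_nonempty₀ {m | Disjoint a m}
    (fun _ hc hchain _ _ => ⟨_, hchain.directedOn.disjoint_sSup_right.2 fun _ hm => hc hm,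
      fun _ => le_sSup⟩) b h

namespace Submodule

variable {S : Type*} [Ring S] {P : Type*} [AddCommGroup P] [Module S P]

def IsEssential (K : Submodule S P) : Prop :=
  ∀ X : Submodule S P, Disjoint X K → X = ⊥

end Submodule

open LinearMap Submodule

namespace Module.Injective

variable {S : Type u} [Ring S]

theorem of_finite_of_projective [Module.Injective S S] {M : Type u} [AddCommGroup M]
    [Module S M] [Module.Finite S M] [Module.Projective S M] : Module.Injective S M := by
  obtain ⟨n, π, hπ⟩ := Module.Finite.exists_fin' S M
  obtain ⟨s, hs⟩ := Module.projective_lifting_property π LinearMap.id hπ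
  refine ⟨fun X Y _ _ _ _ f hf g => ?_⟩
  obtain ⟨h, hh⟩ := Module.Injective.out (R := S) (Q := Fin n → S) f hf (s ∘ₗ g)
  exact ⟨π ∘ₗ h, fun x => by simp [hh x, ← LinearMap.comp_apply π s, hs]⟩

variable {P : Type u} [AddCommGroup P] [Module S P]

theorem exists_isCompl_range {N : Type u} [AddCommGroup N] [Module S N] [Module.Injective S N]
    (i : N →ₗ[S] P) (hi : Function.Injective i) : ∃ C, IsCompl (range i) C := by
  obtain ⟨r, hr⟩ := Module.Injective.out (R := S) (Q := N) i hi LinearMap.id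
  exact ⟨_, isCompl_of_proj (f := i.rangeRestrict ∘ₗ r) (by rintro ⟨_, n, rfl⟩; ext; simp [hr])⟩

variable [Module.Injective S P]

theorem isCompl_of_maximal_disjoint {E C : Submodule S P} (hE : Maximal (Disjoint C) E)
    (hC : Maximal (Disjoint E) C) : IsCompl E C := by
  -- `E.map q` is essential in `P ⧸ C`, so the extension `h` of `E ↪ P` along `E ↪ P ⧸ C` is
  -- injective with image disjoint from `C`; maximality of `E` makes `h ∘ q` a projection onto `E`.
  set q := C.mkQ
  have hess : (E.map q).IsEssential := by
    intro D hD
    have hdisj : Disjoint E (D.comap q) := by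
      refine disjoint_def.2 fun x hxE hxD => disjoint_def.1 hC.1 x hxE ?_
      exact (Quotient.mk_eq_zero C).1 (disjoint_def.1 hD _ hxD (mem_map_of_mem hxE))
    have hCD : C ≤ D.comap q := fun x hx => by simp [q, (Quotient.mk_eq_zero C).2 hx]
    rw [← map_comap_eq_of_surjective C.mkQ_surjective D, (hC.2 hdisj hCD).antisymm hCD,
      mkQ_map_self]
  obtain ⟨h, hh⟩ := Module.Injective.out (R := S) (Q := P) (q ∘ₗ E.subtype)
    (by rw [← ker_eq_bot, ker_comp, ker_mkQ, ← disjoint_iff_comap_eq_bot]; exact hC.1) E.subtype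
  replace hh : ∀ x ∈ E, h (q x) = x := fun x hx => hh ⟨x, hx⟩
  have hcomap : ∀ Y : Submodule S P, Disjoint E Y → Y.comap h = ⊥ := fun Y hY =>
    hess _ <| disjoint_def.2 fun z hzY hzE => by
      obtain ⟨x, hxE, rfl⟩ := mem_map.1 hzE
      have hx : x = 0 := disjoint_def.1 hY x hxE (hh x hxE ▸ hzY)
      simp [hx]
  have hker : ker h = ⊥ := hcomap ⊥ disjoint_bot_right
  have hErange : E ≤ range h := fun x hx => ⟨q x, hh x hx⟩
  have hrange : range h = E := le_antisymm (hE.2 (by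
      rw [disjoint_iff, inf_comm, ← map_comap_eq, hcomap C hC.1, Submodule.map_bot]) hErange)
    hErange
  let p : P →ₗ[S] E := (h ∘ₗ q).codRestrict E fun x => hrange ▸ mem_range_self h (q x)
  have hp : ker p = C := by
    rw [ker_codRestrict, ker_comp_of_ker_eq_bot _ hker, ker_mkQ]
  exact hp ▸ isCompl_of_proj (f := p) fun x => Subtype.ext (hh x x.2)

theorem exists_isCompl_of_disjoint {X K : Submodule S P} (h : Disjoint X K) :
    ∃ E C, X ≤ E ∧ K ≤ C ∧ IsCompl E C := by
  obtain ⟨E, hXE, hE⟩ := exists_le_maximal_disjoint h.symm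
  obtain ⟨C, hKC, hC⟩ := exists_le_maximal_disjoint hE.1.symm
  exact ⟨E, C, hXE, hKC, isCompl_of_maximal_disjoint
    ⟨hC.1.symm, fun _ hE' hle => hE.2 (hE'.mono_left hKC) hle⟩ hC⟩

theorem exists_linearEquiv_map_eq {P' : Type u} [AddCommGroup P'] [Module S P']
    [Module.Injective S P'] {K : Submodule S P} {K' : Submodule S P'} (hK : K.IsEssential)
    (hK' : K'.IsEssential) (e : K ≃ₗ[S] K') : ∃ g : P ≃ₗ[S] P', K.map (g : P →ₗ[S] P') = K' := by
  obtain ⟨g, hg⟩ := Module.Injective.out (R := S) (Q := P') K.subtype K.injective_subtype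
    (K'.subtype ∘ₗ e.toLinearMap)
  have hgK : K.map g = K' := calc
    K.map g = range (g ∘ₗ K.subtype) := by rw [range_comp, range_subtype]
    _ = range (K'.subtype ∘ₗ e.toLinearMap) := congrArg range (LinearMap.ext hg)
    _ = K' := by rw [range_comp, LinearEquiv.range, Submodule.map_top, range_subtype]
  have hg_inj : Function.Injective g := by
    refine ker_eq_bot.1 (hK _ (disjoint_def.2 fun x hxg hxK => ?_))
    have : e ⟨x, hxK⟩ = 0 := Subtype.ext ((hg ⟨x, hxK⟩).symm.trans hxg)
    simpa using this
  obtain ⟨C, hC⟩ := Module.Injective.exists_isCompl_range g hg_inj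
  have hC_bot : C = ⊥ := hK' _ (hC.disjoint.symm.mono_right (hgK ▸ map_le_range))
  refine ⟨.ofBijective g ⟨hg_inj, range_eq_top.1 ?_⟩, hgK⟩
  exact codisjoint_bot.1 (hC_bot ▸ hC.codisjoint)

end Module.Injective

section FGMod

variable {R : Type u} [Ring R] [Module.Injective Rᵐᵒᵖ Rᵐᵒᵖ]

theorem FGMod.Proj.injective {P : FGMod R} (hP : P.Proj) : Module.Injective Rᵐᵒᵖ P :=
  have : Module.Projective Rᵐᵒᵖ P := hP
  .of_finite_of_projective

theorem FGMod.Proj.isEssential_ker {M P : FGMod R} (hP : P.Proj) (f : P →ₗ[Rᵐᵒᵖ] M)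
    (hM : ∀ N : FGMod R, N.IsSummand M → N.Proj → Subsingleton N) : (ker f).IsEssential := by
  intro X hX
  have : Module.Projective Rᵐᵒᵖ P := hP
  have := hP.injective
  obtain ⟨E, C, hXE, hKC, hEC⟩ := Module.Injective.exists_isCompl_of_disjoint hX
  have : Module.Finite Rᵐᵒᵖ E := .of_surjective _ (projectionOnto_surjective hEC)
  have : Module.Projective Rᵐᵒᵖ E :=
    .of_split E.subtype (projectionOnto E C hEC) (LinearMap.ext (projectionOnto_apply_left hEC))
  have : Module.Injective Rᵐᵒᵖ E := .of_finite_of_projective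
  have hi : Function.Injective (f ∘ₗ E.subtype) := by
    rw [← ker_eq_bot, ker_comp, ← disjoint_iff_comap_eq_bot]
    exact hEC.disjoint.mono_right hKC
  obtain ⟨B, hB⟩ := Module.Injective.exists_isCompl_range _ hi
  have : Subsingleton E := hM ⟨E⟩ ⟨_, B, hB, ⟨.ofInjective _ hi⟩⟩ ‹_›
  exact eq_bot_iff.2 (hXE.trans (eq_bot_of_subsingleton (p := E)).le)

theorem IsSyzygy.subsingleton_of_isSummand {M L N : FGMod R} (hL : IsSyzygy M L)
    (hN : N.IsSummand L) (hNp : N.Proj) : Subsingleton N := by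
  obtain ⟨P, f, ⟨-, -, hsup⟩, ⟨φ⟩⟩ := hL
  obtain ⟨A, -, -, ⟨ψ⟩⟩ := hN
  have := hNp.injective
  let i : N →ₗ[Rᵐᵒᵖ] P := (ker f).subtype ∘ₗ φ.toLinearMap ∘ₗ A.subtype ∘ₗ ψ.toLinearMap
  have hi : Function.Injective i := (ker f).injective_subtype.comp
    (φ.injective.comp (A.injective_subtype.comp ψ.injective))
  obtain ⟨C, hC⟩ := Module.Injective.exists_isCompl_range i hi
  have hik : range i ≤ ker f := by
    rintro _ ⟨x, rfl⟩
    exact (φ _).2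
  have hC_top : C = ⊤ := hsup C (codisjoint_iff.1 (hC.codisjoint.symm.mono_right hik))
  have hi_zero : i = 0 := range_eq_bot.1 (disjoint_top.1 (hC_top ▸ hC.disjoint))
  exact ⟨fun a b => hi (by simp [hi_zero])⟩

theorem IsSyzygy.iso_of_iso {M₁ M₂ L₁ L₂ : FGMod R} (hL₁ : IsSyzygy M₁ L₁) (hL₂ : IsSyzygy M₂ L₂)
    (h₁ : ∀ N : FGMod R, N.IsSummand M₁ → N.Proj → Subsingleton N)
    (h₂ : ∀ N : FGMod R, N.IsSummand M₂ → N.Proj → Subsingleton N) (hL : L₁.Iso L₂) :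
    M₁.Iso M₂ := by
  obtain ⟨P₁, f₁, hf₁, ⟨φ₁⟩⟩ := hL₁
  obtain ⟨P₂, f₂, hf₂, ⟨φ₂⟩⟩ := hL₂
  obtain ⟨ψ⟩ := hL
  have := hf₁.1.injective
  have := hf₂.1.injective
  obtain ⟨g, hg⟩ := Module.Injective.exists_linearEquiv_map_eq
    (hf₁.1.isEssential_ker f₁ h₁) (hf₂.1.isEssential_ker f₂ h₂) (φ₁.symm ≪≫ₗ ψ ≪≫ₗ φ₂)
  exact ⟨(f₁.quotKerEquivOfSurjective hf₁.2.1).symm ≪≫ₗ Submodule.Quotient.equiv _ _ g hg ≪≫ₗ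
    f₂.quotKerEquivOfSurjective hf₂.2.1⟩

end FGMod

theorem iso_of_syzygy_iso_selfinjective_general (R : Type u) [Ring R]
    (hinj : Module.Injective Rᵐᵒᵖ Rᵐᵒᵖ)
    (M₁ M₂ : FGMod R)
    (h₁ : ∀ N : FGMod R, N.IsSummand M₁ → N.Proj → Subsingleton N)
    (h₂ : ∀ N : FGMod R, N.IsSummand M₂ → N.Proj → Subsingleton N)
    (n : ℕ) (N₁ N₂ : FGMod R)
    (hN₁ : IsSyzygyN n M₁ N₁) (hN₂ : IsSyzygyN n M₂ N₂) (hiso : N₁.Iso N₂) :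
    M₁.Iso M₂ := by
  induction n generalizing M₁ M₂ with
  | zero =>
    obtain ⟨e₁⟩ := hN₁
    obtain ⟨e₂⟩ := hN₂
    obtain ⟨e⟩ := hiso
    exact ⟨e₁ ≪≫ₗ e ≪≫ₗ e₂.symm⟩
  | succ n ih =>
    obtain ⟨L₁, hL₁, hN₁⟩ := hN₁
    obtain ⟨L₂, hL₂, hN₂⟩ := hN₂
    exact hL₁.iso_of_iso hL₂ h₁ h₂ (ih L₁ L₂ (fun _ => hL₁.subsingleton_of_isSummand)
      (fun _ => hL₂.subsingleton_of_isSummand) hN₁ hN₂)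

/-- Over a right artinian right self-injective ring, if `M₁, M₂` have
no (nonzero) projective direct summands and `Ωⁿ M₁ ≅ Ωⁿ M₂`, then `M₁ ≅ M₂`. -/
theorem iso_of_syzygy_iso_selfinjective (R : Type u) [Ring R] [IsArtinianRing Rᵐᵒᵖ]
    (hinj : Module.Injective Rᵐᵒᵖ Rᵐᵒᵖ)
    (M₁ M₂ : FGMod R)
    (h₁ : ∀ N : FGMod R, N.IsSummand M₁ → N.Proj → Subsingleton N)
    (h₂ : ∀ N : FGMod R, N.IsSummand M₂ → N.Proj → Subsingleton N)
    (n : ℕ) (N₁ N₂ : FGMod R)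
    (hN₁ : IsSyzygyN n M₁ N₁) (hN₂ : IsSyzygyN n M₂ N₂) (hiso : N₁.Iso N₂) :
    M₁.Iso M₂ :=
  iso_of_syzygy_iso_selfinjective_general R hinj M₁ M₂ h₁ h₂ n N₁ N₂ hN₁ hN₂ hiso
end
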